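/- Monotone exhaustion of covolume: Let K ∈ C_b(D) and let {ω_i} be an increasing sequence of compact subsets of D with ⋃_i ω_i = D. Then K_{ω_{i+1}} ⊆ K_{ω_i}, K = ⋂_i K_{ω_i}, and V_n(K^c) = lim_{i→∞} V_n(K_{ω_i}^c). -/

import Mathlib

open MeasureTheory Set Filter Metric Bornology
open scoped RealInnerProductSpace ENNReal NNReal Topology Pointwise

noncomputable section

abbrev E (n : ℕ) := EuclideanSpace ℝ (Fin (n + 1))

/-- The last coordinate direction `e_{n+1}`. -/
def eLast (n : ℕ) : E n := EuclideanSpace.single (Fin.last n) 1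

/-- The closed upper half space `H^+_{n+1}`. -/
def upperHalf (n : ℕ) : Set (E n) := {x | 0 ≤ ⟪x, eLast n⟫}

/-- The open lower hemisphere `S^n_-`. -/
def Snminus (n : ℕ) : Set (E n) := {x | ‖x‖ = 1 ∧ ⟪x, eLast n⟫ < 0}

/-- `u` is an outer normal of `K` at `x`, i.e. `{y | ⟪y,u⟫ ≤ ⟪x,u⟫}` is a
supporting half space of `K` at `x`. -/
def IsSupport (n : ℕ) (K : Set (E n)) (x u : E n) : Prop :=
  u ≠ 0 ∧ ∀ y ∈ K, ⟪y, u⟫ ≤ ⟪x, u⟫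

/-- The `t`-asymptotic boundary set `A_t(K)`. -/
def At (n : ℕ) (K : Set (E n)) (t : ℝ) : Set (E n) :=
  {x | 0 ≤ ⟪x, eLast n⟫ ∧ ⟪x, eLast n⟫ ≤ t} ∩
    ⋂ x ∈ frontier K ∩ {y | ⟪y, eLast n⟫ = t}, ⋂ u ∈ {u | IsSupport n K x u},
      {y | ⟪y, u⟫ ≤ ⟪x, u⟫}

/-- The asymptotic boundary set `A(K)`. -/
def Abdry (n : ℕ) (K : Set (E n)) : Set (E n) := closure (⋃ t ∈ Ioi (0 : ℝ), At n K t)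

/-- The class `C_0`: non-compact closed convex subsets of the upper half space with
the origin on the boundary and nonempty interior. -/
structure IsC0 (n : ℕ) (K : Set (E n)) : Prop where
  conv : Convex ℝ K
  closed : IsClosed K
  noncompact : ¬ IsCompact K
  sub : K ⊆ upperHalf n
  origin : (0 : E n) ∈ frontier K
  int_ne : (interior K).Nonempty

/-- The class `C_c`: members of `C_0` with `A(K) ∩ {x_{n+1} = 0}` compact. -/
def IsCc (n : ℕ) (K : Set (E n)) : Prop :=
  IsC0 n K ∧ IsCompact (Abdry n K ∩ {x | ⟪x, eLast n⟫ = 0})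

/-- The coconvex set `K^c := A(K) \ K`. -/
def coco (n : ℕ) (K : Set (E n)) : Set (E n) := Abdry n K \ K

/-- The class `C_b`: members of `C_c` with `K^c` of finite volume. -/
def IsCb (n : ℕ) (K : Set (E n)) : Prop := IsCc n K ∧ volume (coco n K) < ⊤

/-- The support function of `K`. -/
def supportFn (n : ℕ) (K : Set (E n)) (u : E n) : ℝ :=
  sSup ((fun y => ⟪y, u⟫) '' K)

/-- Membership in `C_c(D)`: the support function of `K` is finite exactly on `closure D`. -/
def IsCcD (n : ℕ) (D K : Set (E n)) : Prop :=
  IsCc n K ∧ ∀ u : E n, ‖u‖ = 1 →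
    (BddAbove ((fun y => ⟪y, u⟫) '' K) ↔ u ∈ closure D)

/-- Membership in `C_b(D)`. -/
def IsCbD (n : ℕ) (D K : Set (E n)) : Prop := IsCcD n D K ∧ volume (coco n K) < ⊤

/-- `D` is a convex domain in `S^n_-` (the cone over `D` together with `0` is convex). -/
def IsConvexDomain (n : ℕ) (D : Set (E n)) : Prop :=
  D.Nonempty ∧ D ⊆ Snminus n ∧
    Convex ℝ (insert 0 {x : E n | ∃ r : ℝ, 0 < r ∧ ∃ u ∈ D, x = r • u})

/-- A choice of unit outer normal of `K` at `x` (the Gauss map; junk value `0`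
where no unit outer normal exists). -/
def normalAt (n : ℕ) (K : Set (E n)) (x : E n) : E n :=
  Classical.epsilon (fun u : E n => ‖u‖ = 1 ∧ IsSupport n K x u)

/-- The surface area measure of `K`: the push forward of the `n`-dimensional
Hausdorff measure on `∂K` under the Gauss map. -/
def surfMeasure (n : ℕ) (K : Set (E n)) : Measure (E n) :=
  Measure.map (normalAt n K) (μH[(n : ℝ)].restrict (frontier K))

/-- The co-sum `(1-l)·K₀ᶜ ⊕ l·K₁ᶜ := A((1-l)K₀ + lK₁) \ ((1-l)K₀ + lK₁)`. -/
def cosum (n : ℕ) (K0 K1 : Set (E n)) (l : ℝ) : Set (E n) :=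
  Abdry n ((1 - l) • K0 + l • K1) \ ((1 - l) • K0 + l • K1)

/-- The Wulff shape `K_ω` associated with `K` and a compact set `ω ⊆ D`. -/
def wulffOf (n : ℕ) (K ω : Set (E n)) : Set (E n) :=
  Abdry n K ∩ ⋂ u ∈ ω, {x | ⟪x, u⟫ ≤ supportFn n K u}

/-- The mixed covolume of `K^c` and `L^c` (integral representation). -/
def mixedCovol (n : ℕ) (D K L : Set (E n)) : ℝ :=
  (1 / (n + 1 : ℝ)) * ∫ u in D, (supportFn n K u - supportFn n L u) ∂(surfMeasure n K)

end

/-! Monotonicity in `ω` and continuity of volume from below are formal; the content is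
`⋂ i, K_{ω_i} ⊆ K`. A point `x ∉ K` is separated from `K` by a unit direction `u₁` at which
`h_K` is finite, so `u₁` lies in the closure of `D`. Pushing `u₁` slightly towards a relative
interior point of the convex cone over `D` yields a direction `w` in that cone, and convexity of
`h_K - ⟪x, ·⟫` keeps `h_K(w) < ⟪x, w⟫`. Rescaling `w` into `D = ⋃ ω_i` shows that `x` violates
one of the inequalities defining some `K_{ω_i}`. -/

theorem Convex.exists_openSegment_subset_of_zero_mem {F : Type*} [NormedAddCommGroup F]
    [NormedSpace ℝ F] [FiniteDimensional ℝ F] {C : Set F} (hC : Convex ℝ C) (h0 : (0 : F) ∈ C) :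
    ∃ z ∈ C, ∀ p ∈ closure C, openSegment ℝ z p ⊆ C := by
  -- since `0 ∈ C`, `C` spans `V` affinely and so has interior there
  set V := Submodule.span ℝ C
  set C' : Set V := (↑) ⁻¹' C
  have hC' : Convex ℝ C' := hC.linear_preimage V.subtype
  have h0' : (0 : V) ∈ C' := h0
  have hspan : affineSpan ℝ C' = ⊤ := by
    rw [AffineSubspace.affineSpan_eq_top_iff_vectorSpan_eq_top_of_nonempty ℝ V V ⟨0, h0'⟩,
      vectorSpan_eq_span_vsub_set_right ℝ h0']
    simp only [vsub_eq_sub, sub_zero, image_id']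
    exact Submodule.span_span_coe_preimage
  obtain ⟨z, hz⟩ := hC'.interior_nonempty_iff_affineSpan_eq_top.2 hspan
  refine ⟨z, interior_subset (s := C') hz, fun p hp => ?_⟩
  have hpV : p ∈ V :=
    closure_minimal Submodule.subset_span V.closed_of_finiteDimensional hp
  have hp' : (⟨p, hpV⟩ : V) ∈ closure C' := by
    rw [Topology.IsEmbedding.subtypeVal.closure_eq_preimage_closure_image,
      image_preimage_eq_of_subset (by simp [V])]
    exact hp
  calc openSegment ℝ (z : F) p = V.subtype.toAffineMap '' openSegment ℝ z ⟨p, hpV⟩ :=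
        (image_openSegment ℝ V.subtype.toAffineMap z ⟨p, hpV⟩).symm
    _ ⊆ (↑) '' C' :=
        image_mono ((hC'.openSegment_interior_closure_subset_interior hz hp').trans interior_subset)
    _ ⊆ C := image_preimage_subset _ _

/-- The cone over `D` whose convexity is required in `IsConvexDomain`. -/
def posCone {F : Type*} [AddCommGroup F] [Module ℝ F] (D : Set F) : Set F :=
  insert 0 {x | ∃ r : ℝ, 0 < r ∧ ∃ u ∈ D, x = r • u}

theorem bddAbove_inner_of_mem_posCone {F : Type*} [NormedAddCommGroup F] [InnerProductSpace ℝ F]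
    {K D : Set F} (hD : ∀ u ∈ D, BddAbove ((fun y => ⟪y, u⟫) '' K)) {z : F}
    (hz : z ∈ posCone D) : BddAbove ((fun y => ⟪y, z⟫) '' K) := by
  rcases hz with rfl | ⟨r, hr, u, hu, rfl⟩
  · exact ⟨0, forall_mem_image.2 fun y _ => (inner_zero_right y).le⟩
  · obtain ⟨M, hM⟩ := hD u hu
    refine ⟨r * M, forall_mem_image.2 fun y hy => ?_⟩
    rw [real_inner_smul_right]
    exact mul_le_mul_of_nonneg_left (hM (mem_image_of_mem _ hy)) hr.le

section SupportFunction

variable {n : ℕ} {K : Set (E n)} {u v x : E n}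

theorem supportFn_smul (K : Set (E n)) {r : ℝ} (hr : 0 ≤ r) (u : E n) :
    supportFn n K (r • u) = r * supportFn n K u := by
  rw [supportFn, supportFn, ← smul_eq_mul, ← Real.sSup_smul_of_nonneg hr, ← image_smul,
    image_image]
  simp_rw [real_inner_smul_right, smul_eq_mul]

theorem supportFn_zero (K : Set (E n)) : supportFn n K 0 = 0 := by
  simpa using supportFn_smul K le_rfl 0

theorem inner_le_supportFn (hu : BddAbove ((fun y => ⟪y, u⟫) '' K)) {y : E n} (hy : y ∈ K) :
    ⟪y, u⟫ ≤ supportFn n K u :=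
  le_csSup hu (mem_image_of_mem _ hy)

theorem supportFn_le (hK : K.Nonempty) {c : ℝ} (h : ∀ y ∈ K, ⟪y, u⟫ ≤ c) :
    supportFn n K u ≤ c :=
  csSup_le (hK.image _) (forall_mem_image.2 h)

theorem supportFn_smul_add_smul_le (hK : K.Nonempty) (hu : BddAbove ((fun y => ⟪y, u⟫) '' K))
    (hv : BddAbove ((fun y => ⟪y, v⟫) '' K)) {a b : ℝ} (ha : 0 ≤ a) (hb : 0 ≤ b) :
    supportFn n K (a • u + b • v) ≤ a * supportFn n K u + b * supportFn n K v :=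
  supportFn_le hK fun y hy => by
    rw [inner_add_right, real_inner_smul_right, real_inner_smul_right]
    gcongr
    exacts [inner_le_supportFn hu hy, inner_le_supportFn hv hy]

/-- The unit normal at the nearest point of `K` to `x` separates `x` from `K`. -/
theorem exists_unit_supportFn_lt_inner (hKc : IsClosed K) (hKconv : Convex ℝ K)
    (hK : K.Nonempty) (hx : x ∉ K) :
    ∃ u : E n, ‖u‖ = 1 ∧ BddAbove ((fun y => ⟪y, u⟫) '' K) ∧ supportFn n K u < ⟪x, u⟫ := by
  obtain ⟨p, hpK, hp⟩ := exists_norm_eq_iInf_of_complete_convex hK hKc.isComplete hKconv x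
  have hxp : x - p ≠ 0 := sub_ne_zero.2 (ne_of_mem_of_not_mem hpK hx).symm
  set u := ‖x - p‖⁻¹ • (x - p)
  have hKu : ∀ y ∈ K, ⟪y, u⟫ ≤ ⟪p, u⟫ := fun y hy => by
    have hobtuse := (norm_eq_iInf_iff_real_inner_le_zero hKconv hpK).1 hp y hy
    have hdiff : ⟪y, u⟫ - ⟪p, u⟫ = ‖x - p‖⁻¹ * ⟪x - p, y - p⟫ := by
      rw [← inner_sub_left, real_inner_smul_right, real_inner_comm]
    have hnonpos : ‖x - p‖⁻¹ * ⟪x - p, y - p⟫ ≤ 0 :=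
      mul_nonpos_of_nonneg_of_nonpos (by positivity) hobtuse
    linarith
  have hpx : ⟪x, u⟫ - ⟪p, u⟫ = ‖x - p‖ := by
    rw [← inner_sub_left, real_inner_smul_right, real_inner_self_eq_norm_sq]
    field_simp
  exact ⟨u, norm_smul_inv_norm hxp, ⟨_, forall_mem_image.2 hKu⟩,
    (supportFn_le hK hKu).trans_lt (by linarith [norm_pos_iff.2 hxp])⟩

theorem exists_mem_supportFn_lt_inner_of_mem_posCone {D : Set (E n)} {w : E n}
    (hw : w ∈ posCone D) (hlt : supportFn n K w < ⟪x, w⟫) :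
    ∃ u ∈ D, supportFn n K u < ⟪x, u⟫ := by
  obtain ⟨r, hr, u, hu, rfl⟩ := hw.resolve_left (by rintro rfl; simp [supportFn_zero] at hlt)
  rw [supportFn_smul K hr.le, real_inner_smul_right] at hlt
  exact ⟨u, hu, lt_of_mul_lt_mul_left hlt hr.le⟩

end SupportFunction

section WulffShape

variable {n : ℕ} {D K : Set (E n)}

theorem IsCcD.bddAbove_inner (hK : IsCcD n D K) (hD : IsConvexDomain n D) {u : E n}
    (hu : u ∈ D) : BddAbove ((fun y => ⟪y, u⟫) '' K) :=
  (hK.2 u (hD.2.1 hu).1).2 (subset_closure hu)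

theorem IsCcD.exists_mem_supportFn_lt_inner (hK : IsCcD n D K) (hD : IsConvexDomain n D)
    {x : E n} (hx : x ∉ K) : ∃ u ∈ D, supportFn n K u < ⟪x, u⟫ := by
  have hC0 := hK.1.1
  have hKne : K.Nonempty := hC0.int_ne.mono interior_subset
  obtain ⟨u₁, hu₁, hbdd₁, hlt₁⟩ := exists_unit_supportFn_lt_inner hC0.closed hC0.conv hKne hx
  have hu₁C : u₁ ∈ closure (posCone D) :=
    closure_mono (fun u hu => Or.inr ⟨1, one_pos, u, hu, (one_smul ℝ u).symm⟩)
      ((hK.2 u₁ hu₁).1 hbdd₁)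
  obtain ⟨z, hzC, hseg⟩ :=
    (hD.2.2 : Convex ℝ (posCone D)).exists_openSegment_subset_of_zero_mem (mem_insert 0 _)
  -- `u₁` violates `x`'s support inequality strictly, so points of `(z, u₁)` close to `u₁` do too
  obtain ⟨θ, ⟨hθ0, hθ1⟩, hθ⟩ : ∃ θ ∈ Ioo (0 : ℝ) 1,
      (1 - θ) * (supportFn n K z - ⟪x, z⟫) + θ * (supportFn n K u₁ - ⟪x, u₁⟫) < 0 := by
    have h : Tendsto (fun θ : ℝ => (1 - θ) * (supportFn n K z - ⟪x, z⟫)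
        + θ * (supportFn n K u₁ - ⟪x, u₁⟫)) (𝓝[<] 1) (𝓝 (supportFn n K u₁ - ⟪x, u₁⟫)) :=
      ((by fun_prop : Continuous _).tendsto' 1 _ (by simp)).mono_left nhdsWithin_le_nhds
    exact (Eventually.and (Ioo_mem_nhdsLT one_pos)
      (h.eventually (gt_mem_nhds (by linarith)))).exists
  refine exists_mem_supportFn_lt_inner_of_mem_posCone
    (hseg u₁ hu₁C ⟨1 - θ, θ, by linarith, hθ0, by ring, rfl⟩) ?_
  calc supportFn n K ((1 - θ) • z + θ • u₁)
      ≤ (1 - θ) * supportFn n K z + θ * supportFn n K u₁ :=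
        supportFn_smul_add_smul_le hKne (bddAbove_inner_of_mem_posCone
          (fun u hu => hK.bddAbove_inner hD hu) hzC) hbdd₁ (by linarith) hθ0.le
    _ < ⟪x, (1 - θ) • z + θ • u₁⟫ := by
        rw [inner_add_right, real_inner_smul_right, real_inner_smul_right]
        linarith

theorem subset_Abdry (hK : K ⊆ upperHalf n) : K ⊆ Abdry n K := fun y hy => by
  have hy0 : 0 ≤ ⟪y, eLast n⟫ := hK hy
  refine subset_closure (mem_biUnion (x := ⟪y, eLast n⟫ + 1) (by rw [mem_Ioi]; linarith) ?_)
  exact ⟨⟨hy0, by linarith⟩, mem_iInter₂.2 fun _ _ => mem_iInter₂.2 fun _ hu => hu.2 y hy⟩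

theorem wulffOf_anti {ω ω' : Set (E n)} (h : ω ⊆ ω') : wulffOf n K ω' ⊆ wulffOf n K ω :=
  inter_subset_inter_right _ (biInter_subset_biInter_left h)

theorem subset_wulffOf {ω : Set (E n)} (hKA : K ⊆ Abdry n K)
    (hω : ∀ u ∈ ω, BddAbove ((fun y => ⟪y, u⟫) '' K)) : K ⊆ wulffOf n K ω :=
  fun _ hy => ⟨hKA hy, mem_iInter₂.2 fun u hu => inner_le_supportFn (hω u hu) hy⟩

theorem iInter_wulffOf_subset {ι : Type*} {ω : ι → Set (E n)} (hD : D ⊆ ⋃ i, ω i)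
    (hsep : ∀ x ∉ K, ∃ u ∈ D, supportFn n K u < ⟪x, u⟫) : ⋂ i, wulffOf n K (ω i) ⊆ K := by
  intro x hx
  by_contra hxK
  obtain ⟨u, hu, hlt⟩ := hsep x hxK
  obtain ⟨i, hi⟩ := mem_iUnion.1 (hD hu)
  exact hlt.not_ge (mem_iInter₂.1 (mem_iInter.1 hx i).2 u hi)

end WulffShape

theorem covolume_exhaustion_general (n : ℕ) (D : Set (E n)) (hD : IsConvexDomain n D)
    (K : Set (E n)) (hK : IsCbD n D K)
    (ω : ℕ → Set (E n)) (hωD : ∀ i, ω i ⊆ D)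
    (hmono : ∀ i, ω i ⊆ ω (i + 1)) (hunion : ⋃ i, ω i = D) :
    (∀ i, wulffOf n K (ω (i + 1)) ⊆ wulffOf n K (ω i)) ∧
    K = ⋂ i, wulffOf n K (ω i) ∧
    Filter.Tendsto (fun i => volume (Abdry n K \ wulffOf n K (ω i))) Filter.atTop
      (nhds (volume (coco n K))) := by
  have hanti : Antitone fun i => wulffOf n K (ω i) :=
    antitone_nat_of_succ_le fun i => wulffOf_anti (hmono i)
  have hKeq : K = ⋂ i, wulffOf n K (ω i) :=
    (subset_iInter fun i => subset_wulffOf (subset_Abdry hK.1.1.1.sub)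
        fun _ hu => hK.1.bddAbove_inner hD (hωD i hu)).antisymm
      (iInter_wulffOf_subset hunion.ge fun _ hx => hK.1.exists_mem_supportFn_lt_inner hD hx)
  refine ⟨fun i => hanti i.le_succ, hKeq, ?_⟩
  have h := tendsto_measure_iUnion_atTop (μ := volume)
    fun i j hij => sdiff_subset_sdiff_right (s := Abdry n K) (hanti hij)
  rwa [← sdiff_iInter, ← hKeq] at h

/-- Monotone exhaustion of the covolume. -/
theorem covolume_exhaustion (n : ℕ) (D : Set (E n)) (hD : IsConvexDomain n D)
    (K : Set (E n)) (hK : IsCbD n D K)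
    (ω : ℕ → Set (E n)) (hωc : ∀ i, IsCompact (ω i)) (hωD : ∀ i, ω i ⊆ D)
    (hmono : ∀ i, ω i ⊆ ω (i + 1)) (hunion : ⋃ i, ω i = D) :
    (∀ i, wulffOf n K (ω (i + 1)) ⊆ wulffOf n K (ω i)) ∧
    K = ⋂ i, wulffOf n K (ω i) ∧
    Filter.Tendsto (fun i => volume (Abdry n K \ wulffOf n K (ω i))) Filter.atTop
      (nhds (volume (coco n K))) :=
  covolume_exhaustion_general n D hD K hK ω hωD hmono hunion
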